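/- arXiv:2412.15680 — 7 statements merged into one kernel-verified Lean document; each statement's English description precedes it below -/
import Mathlib

section
/- Let 3/4 < λ < 1. Then for all r ∈ (0, π/2), one has sin((π/2 − r)·√(1−λ)) · tan(r) < √(1−λ). -/
/-! With `t = π/2 - r` and `s = √(1 - λ) > 0` the claim reads `sin (t s) · tan (π/2 - t) < s`.
Since `sin (t s) < t s`, it suffices that `t · tan (π/2 - t) = t / tan t < 1`, which is the
classical `t < tan t` on `(0, π/2)`. -/

open Real

lemma mul_tan_pi_div_two_sub_lt_one {t : ℝ} (ht0 : 0 < t) (ht : t < π / 2) :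
    t * tan (π / 2 - t) < 1 := by
  have htan : 0 < tan t := ht0.trans (lt_tan ht0 ht)
  rw [tan_pi_div_two_sub, ← div_eq_mul_inv, div_lt_one htan]
  exact lt_tan ht0 ht

lemma sin_mul_mul_tan_pi_div_two_sub_lt {s t : ℝ} (hs : 0 < s) (ht0 : 0 < t) (ht : t < π / 2) :
    sin (t * s) * tan (π / 2 - t) < s := by
  have htan : 0 < tan (π / 2 - t) :=
    tan_pos_of_pos_of_lt_pi_div_two (by linarith) (by linarith)
  calc sin (t * s) * tan (π / 2 - t) < t * s * tan (π / 2 - t) :=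
        mul_lt_mul_of_pos_right (sin_lt (by positivity)) htan
    _ = s * (t * tan (π / 2 - t)) := by ring
    _ < s * 1 := mul_lt_mul_of_pos_left (mul_tan_pi_div_two_sub_lt_one ht0 ht) hs
    _ = s := mul_one s

theorem stmt0_general (lam r : ℝ) (h2 : lam < 1)
    (hr1 : 0 < r) (hr2 : r < π/2) :
    Real.sin ((π/2 - r) * Real.sqrt (1 - lam)) * Real.tan r < Real.sqrt (1 - lam) := by
  have key := sin_mul_mul_tan_pi_div_two_sub_lt (Real.sqrt_pos.mpr (sub_pos.mpr h2))
    (sub_pos.mpr hr2) (sub_lt_self _ hr1)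
  rwa [sub_sub_cancel] at key

theorem stmt0 (lam r : ℝ) (h1 : 3/4 < lam) (h2 : lam < 1)
    (hr1 : 0 < r) (hr2 : r < π/2) :
    Real.sin ((π/2 - r) * Real.sqrt (1 - lam)) * Real.tan r < Real.sqrt (1 - lam) :=
  stmt0_general lam r h2 hr1 hr2
end

section
/- Let λ ∈ ℝ with λ < 1, and define ψ(r) = cos(r√(1−λ)), φ(r) = ψ(r)/cos(r), and t(r) = tan(r√(1−λ))/√(1−λ). Let r(t) denote the inverse function of t(r) on (−π/2, π/2). Then the function w(t) = λ^{1/(p−1)} · cos(r(t))/ψ(r(t)) satisfies the ODE w''(t) + (cos r(t))^{1−p} ψ(r(t))^{p+3} w(t)^p = 0 on the interval where r(t) ∈ (−π/2, π/2), for any p > 1 and λ > 0. -/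
open Real Set Filter Topology

/-! With s = √(1-λ), ψ(r) = cos(rs) and C = λ^{1/(p-1)}, the inverse ρ is arctan(st)/s, so
ρ' = ψ(ρ)². Hence w = C·(cos/ψ)∘ρ has w' = C·W(ρ), where W = ψ cos' - ψ' cos is the Wronskian of
ψ and cos. Since ψ'' = -s²ψ and cos'' = -cos, W' = -(1-s²) ψ cos = -λ ψ cos, so
w'' = -λC cos(ρ) ψ(ρ)³; the relation C^p = λC makes the nonlinear term exactly +λC cos(ρ) ψ(ρ)³. -/

lemma mul_eq_arctan_of_tan_mul_div_eq {r s t : ℝ} (hs : 0 < s) (hs1 : s ≤ 1)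
    (hr : r ∈ Ioo (-(π / 2)) (π / 2)) (h : tan (r * s) / s = t) : r * s = arctan (t * s) := by
  rw [← h, div_mul_cancel₀ _ hs.ne', arctan_tan]
  · nlinarith [hr.1, hr.2]
  · nlinarith [hr.1, hr.2]

lemma hasDerivAt_arctan_mul_div {s : ℝ} (hs : s ≠ 0) (t : ℝ) :
    HasDerivAt (fun t => arctan (t * s) / s) (cos (arctan (t * s)) ^ 2) t := by
  rw [cos_sq_arctan]
  exact ((hasDerivAt_mul_const s).arctan.div_const s).congr_deriv (by field_simp)

section

variable (s : ℝ)

lemma hasDerivAt_cos_div_cos_mul {r : ℝ} (hr : cos (r * s) ≠ 0) :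
    HasDerivAt (fun r => cos r / cos (r * s))
      ((-sin r * cos (r * s) + s * cos r * sin (r * s)) / cos (r * s) ^ 2) r :=
  ((hasDerivAt_cos r).fun_div (hasDerivAt_mul_const s).cos hr).congr_deriv (by ring)

lemma hasDerivAt_wronskian_cos_mul_cos (r : ℝ) :
    HasDerivAt (fun r => -sin r * cos (r * s) + s * cos r * sin (r * s))
      (-(1 - s ^ 2) * cos r * cos (r * s)) r := by
  have hc := (hasDerivAt_mul_const s).cos (x := r)
  have hs := (hasDerivAt_mul_const s).sin (x := r)
  exact (((hasDerivAt_sin r).fun_neg.fun_mul hc).fun_add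
    (((hasDerivAt_cos r).const_mul s).fun_mul hs)).congr_deriv (by ring)

end

lemma rpow_one_sub_mul_rpow_add_three_mul_rpow {x y c p : ℝ} (hx : 0 < x) (hy : 0 < y)
    (hc : 0 ≤ c) : x ^ (1 - p) * y ^ (p + 3) * (c * x / y) ^ p = c ^ p * x * y ^ 3 := by
  rw [div_rpow (by positivity) hy.le, mul_rpow hc hx.le, rpow_sub hx, rpow_add hy, rpow_one]
  norm_cast
  field_simp

lemma rpow_one_div_sub_one_rpow {a p : ℝ} (ha : 0 < a) (hp : p ≠ 1) :
    (a ^ (1 / (p - 1))) ^ p = a * a ^ (1 / (p - 1)) := by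
  rw [← rpow_mul ha.le, show 1 / (p - 1) * p = 1 + 1 / (p - 1) by field_simp; ring,
    rpow_add ha, rpow_one]

theorem stmt1_general (p lam : ℝ) (hp : 1 < p) (hl0 : 0 < lam) (hl1 : lam < 1)
    (T : ℝ)
    (ρ : ℝ → ℝ)
    (hρ : ∀ t ∈ Set.Ioo (-T) T, ρ t ∈ Set.Ioo (-(π/2)) (π/2) ∧
      Real.tan (ρ t * Real.sqrt (1 - lam)) / Real.sqrt (1 - lam) = t)
    (w : ℝ → ℝ)
    (hw : w = fun t => lam ^ ((1:ℝ)/(p-1)) * Real.cos (ρ t) / Real.cos (ρ t * Real.sqrt (1 - lam)))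
    (t₀ : ℝ) (ht₀ : t₀ ∈ Set.Ioo (-T) T) :
    deriv (deriv w) t₀
      + (Real.cos (ρ t₀)) ^ (1 - p) * (Real.cos (ρ t₀ * Real.sqrt (1 - lam))) ^ (p + 3)
        * (w t₀) ^ p = 0 := by
  subst hw
  set s := √(1 - lam)
  set C := lam ^ ((1:ℝ) / (p - 1))
  have hs0 : 0 < s := sqrt_pos.2 (by linarith)
  have hs1 : s ≤ 1 := sqrt_le_one.2 (by linarith)
  have hρs : ∀ t ∈ Ioo (-T) T, ρ t * s = arctan (t * s) := fun t ht =>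
    mul_eq_arctan_of_tan_mul_div_eq hs0 hs1 (hρ t ht).1 (hρ t ht).2
  have hψ : ∀ t ∈ Ioo (-T) T, 0 < cos (ρ t * s) := fun t ht => hρs t ht ▸ cos_arctan_pos _
  have hρ' : ∀ t ∈ Ioo (-T) T, HasDerivAt ρ (cos (ρ t * s) ^ 2) t := by
    intro t ht
    rw [hρs t ht]
    refine (hasDerivAt_arctan_mul_div hs0.ne' t).congr_of_eventuallyEq ?_
    filter_upwards [isOpen_Ioo.mem_nhds ht] with u hu
    exact eq_div_of_mul_eq hs0.ne' (hρs u hu)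
  have hw' : ∀ t ∈ Ioo (-T) T, HasDerivAt (fun t => C * cos (ρ t) / cos (ρ t * s))
      (C * (-sin (ρ t) * cos (ρ t * s) + s * cos (ρ t) * sin (ρ t * s))) t := by
    intro t ht
    simp_rw [mul_div_assoc]
    exact (((hasDerivAt_cos_div_cos_mul s (hψ t ht).ne').comp t (hρ' t ht)).const_mul C).congr_deriv
      (by field_simp [(hψ t ht).ne'])
  have hw'' := (((hasDerivAt_wronskian_cos_mul_cos s (ρ t₀)).comp t₀ (hρ' t₀ ht₀)).const_mul C)
  have hdw : deriv (fun t => C * cos (ρ t) / cos (ρ t * s)) =ᶠ[𝓝 t₀]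
      fun t => C * (-sin (ρ t) * cos (ρ t * s) + s * cos (ρ t) * sin (ρ t * s)) := by
    filter_upwards [isOpen_Ioo.mem_nhds ht₀] with t ht
    exact (hw' t ht).deriv
  have hcos : 0 < cos (ρ t₀) := cos_pos_of_mem_Ioo (hρ t₀ ht₀).1
  rw [(hw''.congr_of_eventuallyEq hdw).deriv,
    rpow_one_sub_mul_rpow_add_three_mul_rpow hcos (hψ t₀ ht₀) (by positivity),
    rpow_one_div_sub_one_rpow hl0 hp.ne', sq_sqrt (by linarith)]
  ring

/-- The explicit function `w(t) = λ^{1/(p-1)} cos(r(t))/ψ(r(t))` is an exact solution of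
the transformed equation `w'' + (cos r(t))^{1-p} ψ(r(t))^{p+3} w^p = 0`, where `r(t)` is
the inverse of `t(r) = tan(r√(1-λ))/√(1-λ)` on `(-π/2, π/2)`. -/
theorem stmt1 (p lam : ℝ) (hp : 1 < p) (hl0 : 0 < lam) (hl1 : lam < 1)
    (T : ℝ) (hT : T = Real.tan ((π/2) * Real.sqrt (1 - lam)) / Real.sqrt (1 - lam))
    (ρ : ℝ → ℝ)
    (hρ : ∀ t ∈ Set.Ioo (-T) T, ρ t ∈ Set.Ioo (-(π/2)) (π/2) ∧
      Real.tan (ρ t * Real.sqrt (1 - lam)) / Real.sqrt (1 - lam) = t)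
    (w : ℝ → ℝ)
    (hw : w = fun t => lam ^ ((1:ℝ)/(p-1)) * Real.cos (ρ t) / Real.cos (ρ t * Real.sqrt (1 - lam)))
    (t₀ : ℝ) (ht₀ : t₀ ∈ Set.Ioo (-T) T) :
    deriv (deriv w) t₀
      + (Real.cos (ρ t₀)) ^ (1 - p) * (Real.cos (ρ t₀ * Real.sqrt (1 - lam))) ^ (p + 3)
        * (w t₀) ^ p = 0 :=
  stmt1_general p lam hp hl0 hl1 T ρ hρ w hw t₀ ht₀
end

section
/- Let p > 3, 0 < λ ≤ 1, b = t(π/2) where t(r) = tan(r√(1−λ))/√(1−λ) (and t(r) = r if λ = 1), and let h(t) = (cos r(t))^{1−p}·(cos(r(t)√(1−λ)))^{p+3}. Then any solution w of w'' + h(t)|w|^{p−1}w = 0 with w(0) = α > 0, w'(0) = 0 has a first zero Z(α) in (0, t(π/2)]; i.e., w cannot remain positive on all of [0, t(π/2)]. -/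
open Real

private lemma tan_sub_ge' {x y : ℝ} (hx : 0 ≤ x) (hxy : x ≤ y) (hy : y < π/2) :
    y - x ≤ Real.tan y - Real.tan x := by
  rcases eq_or_lt_of_le hxy with rfl | hlt
  · simp
  have hcos : ∀ z ∈ Set.Icc x y, 0 < Real.cos z := by
    intro z hz
    exact Real.cos_pos_of_mem_Ioo ⟨by nlinarith [Real.pi_pos, hz.1], lt_of_le_of_lt hz.2 hy⟩
  have hcont : ContinuousOn Real.tan (Set.Icc x y) :=
    Real.continuousOn_tan.mono (fun z hz => (hcos z hz).ne')
  have hderiv : ∀ z ∈ Set.Ioo x y, HasDerivAt Real.tan (1 / Real.cos z ^ 2) z := fun z hz =>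
    Real.hasDerivAt_tan (hcos z (Set.Ioo_subset_Icc_self hz)).ne'
  obtain ⟨c, hc, hceq⟩ := exists_hasDerivAt_eq_slope Real.tan _ hlt hcont hderiv
  have hc' := hcos c (Set.Ioo_subset_Icc_self hc)
  have h1 : (1:ℝ) ≤ 1 / Real.cos c ^ 2 := by
    rw [le_div_iff₀ (by positivity)]
    nlinarith [Real.cos_le_one c]
  rw [hceq] at h1
  rw [le_div_iff₀ (by linarith : (0:ℝ) < y - x)] at h1
  linarith

set_option maxHeartbeats 1000000 in
/-- For `p > 3` and `0 < λ ≤ 1`, a solution of `w'' + h(t)|w|^{p-1}w = 0` with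
`w(0) = α > 0`, `w'(0) = 0` cannot remain positive on all of `[0, t(π/2)]`;
hence its first zero `Z(α)` exists in `(0, t(π/2)]`. -/
theorem stmt4 (p lam : ℝ) (hp : 3 < p) (hl0 : 0 < lam) (hl1 : lam ≤ 1)
    (T : ℝ)
    (hT : T = if lam = 1 then π/2
      else Real.tan ((π/2) * Real.sqrt (1 - lam)) / Real.sqrt (1 - lam))
    (ρ : ℝ → ℝ)
    (hρ : ∀ t ∈ Set.Ico 0 T, ρ t ∈ Set.Ico 0 (π/2) ∧
      (if lam = 1 then ρ t
        else Real.tan (ρ t * Real.sqrt (1 - lam)) / Real.sqrt (1 - lam)) = t)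
    (h : ℝ → ℝ)
    (hh : ∀ t, h t = (Real.cos (ρ t)) ^ (1 - p)
      * (Real.cos (ρ t * Real.sqrt (1 - lam))) ^ (p + 3))
    (α : ℝ) (hα : 0 < α) (w : ℝ → ℝ)
    (hcont : ContinuousOn w (Set.Icc 0 T))
    (hsm : ContDiffOn ℝ 2 w (Set.Ico 0 T))
    (hode : ∀ t ∈ Set.Ioo 0 T, deriv (deriv w) t + h t * |w t| ^ (p - 1) * w t = 0)
    (h0 : w 0 = α) (hd0 : deriv w 0 = 0) :
    ¬ (∀ t ∈ Set.Icc 0 T, 0 < w t) := by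
  intro hpos
  have hπ : (0:ℝ) < π/2 := by positivity
  set μ := Real.sqrt (1 - lam) with hμdef
  have hμ0 : 0 ≤ μ := Real.sqrt_nonneg _
  have hμ1 : μ < 1 := by
    rw [hμdef, Real.sqrt_lt' one_pos]; nlinarith
  have hμltpi : (π/2) * μ < π/2 := by nlinarith
  have hT0 : 0 < T := by
    rw [hT]; split_ifs with hlam
    · exact hπ
    · have hlam' : lam < 1 := lt_of_le_of_ne hl1 hlam
      have hμpos : 0 < μ := Real.sqrt_pos.2 (by linarith)
      have hbpos : 0 < (π/2) * μ := by positivity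
      exact div_pos (Real.tan_pos_of_pos_of_lt_pi_div_two hbpos hμltpi) hμpos
  -- positivity of cos((π/2)μ)
  have hc2 : 0 < Real.cos ((π/2) * μ) :=
    Real.cos_pos_of_mem_Ioo ⟨by nlinarith [Real.pi_pos], hμltpi⟩
  set c2 : ℝ := Real.cos ((π/2) * μ) with hc2def
  -- key lower bound on h
  have hkey : ∀ t ∈ Set.Ico (0:ℝ) T, c2 ^ (p+3) * (T - t) ^ (1-p) ≤ h t := by
    intro t ht
    obtain ⟨⟨hr0, hr2⟩, hρeq⟩ := hρ t ht
    have hcosr : 0 < Real.cos (ρ t) :=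
      Real.cos_pos_of_mem_Ioo ⟨by nlinarith [Real.pi_pos], hr2⟩
    have hrμle : ρ t * μ ≤ (π/2) * μ := by nlinarith
    have hcos2 : c2 ≤ Real.cos (ρ t * μ) := by
      rw [hc2def]
      exact Real.cos_le_cos_of_nonneg_of_le_pi (by positivity)
        (by nlinarith [Real.pi_pos]) hrμle
    have hstep : π/2 - ρ t ≤ T - t := by
      by_cases hlam : lam = 1
      · rw [if_pos hlam] at hρeq
        rw [hT, if_pos hlam, hρeq]
      · rw [if_neg hlam] at hρeq
        have hlam' : lam < 1 := lt_of_le_of_ne hl1 hlam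
        have hμpos : 0 < μ := Real.sqrt_pos.2 (by linarith)
        have htan := tan_sub_ge' (x := ρ t * μ) (y := (π/2) * μ)
          (by positivity) hrμle hμltpi
        calc π/2 - ρ t ≤ (Real.tan ((π/2)*μ) - Real.tan (ρ t * μ))/μ := by
              rw [le_div_iff₀ hμpos]; nlinarith
          _ = Real.tan ((π/2)*μ)/μ - Real.tan (ρ t * μ)/μ := by rw [sub_div]
          _ = T - t := by rw [hT, if_neg hlam, hρeq]
    have hcosle : Real.cos (ρ t) ≤ T - t := by
      have hs : Real.sin (π/2 - ρ t) ≤ π/2 - ρ t := Real.sin_le (by linarith)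
      rw [Real.sin_pi_div_two_sub] at hs
      linarith
    have hTt : 0 < T - t := lt_of_lt_of_le hcosr hcosle
    rw [hh t]
    have h1 : (T - t) ^ (1-p) ≤ (Real.cos (ρ t)) ^ (1-p) :=
      Real.rpow_le_rpow_of_nonpos hcosr hcosle (by linarith)
    have h2 : c2 ^ (p+3) ≤ (Real.cos (ρ t * μ)) ^ (p+3) :=
      Real.rpow_le_rpow hc2.le hcos2 (by linarith)
    calc c2 ^ (p+3) * (T - t) ^ (1-p)
        ≤ (Real.cos (ρ t * μ)) ^ (p+3) * (Real.cos (ρ t)) ^ (1-p) :=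
          mul_le_mul h2 h1 (Real.rpow_nonneg hTt.le _)
            (Real.rpow_nonneg (Real.cos_nonneg_of_mem_Icc
              ⟨by nlinarith [Real.pi_pos, mul_nonneg hr0 hμ0],
               by nlinarith [Real.pi_pos]⟩) _)
      _ = (Real.cos (ρ t)) ^ (1-p) * (Real.cos (ρ t * μ)) ^ (p+3) := mul_comm _ _
  -- min and max of w
  obtain ⟨a, haI, hmin⟩ := isCompact_Icc.exists_isMinOn
    ⟨0, Set.left_mem_Icc.mpr hT0.le⟩ hcont
  obtain ⟨b, hbI, hmax⟩ := isCompact_Icc.exists_isMaxOn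
    ⟨0, Set.left_mem_Icc.mpr hT0.le⟩ hcont
  set m := w a with hmdef
  set M := w b with hMdef
  have hm : 0 < m := hpos a haI
  have hM : 0 < M := hpos b hbI
  have hml : ∀ t ∈ Set.Icc (0:ℝ) T, m ≤ w t := fun t ht => isMinOn_iff.mp hmin t ht
  have hMl : ∀ t ∈ Set.Icc (0:ℝ) T, w t ≤ M := fun t ht => isMaxOn_iff.mp hmax t ht
  -- derivatives setup
  have hopen : IsOpen (Set.Ioo (0:ℝ) T) := isOpen_Ioo
  have hsub : Set.Ioo (0:ℝ) T ⊆ Set.Ico 0 T := Set.Ioo_subset_Ico_self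
  have h21 : (2 : WithTop ℕ∞) = 1 + 1 := by norm_num
  have h2 := (contDiffOn_succ_iff_deriv_of_isOpen (n := 1) hopen).1
    (h21 ▸ hsm.mono hsub)
  have hdw : ∀ t ∈ Set.Ioo (0:ℝ) T, HasDerivAt w (deriv w t) t := fun t ht =>
    ((h2.1 t ht).differentiableAt (hopen.mem_nhds ht)).hasDerivAt
  have hgdiff : DifferentiableOn ℝ (deriv w) (Set.Ioo 0 T) :=
    h2.2.2.differentiableOn one_ne_zero
  have hgcont : ContinuousOn (deriv w) (Set.Ioo 0 T) := hgdiff.continuousOn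
  have hdg : ∀ t ∈ Set.Ioo (0:ℝ) T, HasDerivAt (deriv w) (deriv (deriv w) t) t := fun t ht =>
    ((hgdiff t ht).differentiableAt (hopen.mem_nhds ht)).hasDerivAt
  set c : ℝ := c2 ^ (p+3) with hcdef
  have hc : 0 < c := Real.rpow_pos_of_pos hc2 _
  set P : ℝ := m ^ (p-1) * m with hPdef
  have hP : 0 < P := mul_pos (Real.rpow_pos_of_pos hm _) hm
  -- second derivative bound
  have hineq : ∀ t ∈ Set.Ioo (0:ℝ) T,
      deriv (deriv w) t ≤ -(c * (T - t) ^ (1-p) * P) := by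
    intro t ht
    have htI : t ∈ Set.Ico (0:ℝ) T := hsub ht
    have htIcc : t ∈ Set.Icc (0:ℝ) T := ⟨ht.1.le, ht.2.le⟩
    have hwt : 0 < w t := hpos t htIcc
    have hmw : m ≤ w t := hml t htIcc
    have habs : |w t| = w t := abs_of_pos hwt
    have h1 : m ^ (p-1) ≤ |w t| ^ (p-1) := by
      rw [habs]; exact Real.rpow_le_rpow hm.le hmw (by linarith)
    have hhk := hkey t htI
    have hTt : 0 < T - t := sub_pos.mpr ht.2
    have hhpos : 0 < h t :=
      lt_of_lt_of_le (mul_pos hc (Real.rpow_pos_of_pos hTt _)) hhk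
    have hX : P ≤ |w t| ^ (p-1) * w t :=
      mul_le_mul h1 hmw hm.le (Real.rpow_nonneg (abs_nonneg _) _)
    have hprod : c * (T - t) ^ (1-p) * P ≤ h t * (|w t| ^ (p-1) * w t) :=
      mul_le_mul hhk hX hP.le hhpos.le
    have hodet := hode t ht
    have hassoc : h t * (|w t| ^ (p-1) * w t) = h t * |w t| ^ (p-1) * w t := by ring
    rw [hassoc] at hprod
    linarith
  have hneg : ∀ t ∈ Set.Ioo (0:ℝ) T, deriv (deriv w) t < 0 := by
    intro t ht
    have hTt : 0 < T - t := sub_pos.mpr ht.2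
    have : 0 < c * (T - t) ^ (1-p) * P :=
      mul_pos (mul_pos hc (Real.rpow_pos_of_pos hTt _)) hP
    linarith [hineq t ht]
  have hanti : StrictAntiOn (deriv w) (Set.Ioo 0 T) := by
    apply strictAntiOn_of_deriv_neg (convex_Ioo _ _) hgcont
    intro x hx
    rw [interior_Ioo] at hx
    exact hneg x hx
  -- lower bound for deriv w
  have hlow : ∀ t ∈ Set.Ioo (0:ℝ) T, -(2*M)/(T - t) ≤ deriv w t := by
    intro t ht
    have hTt : 0 < T - t := sub_pos.mpr ht.2
    set t' := (t + T)/2 with ht'def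
    have htt' : t < t' := by rw [ht'def]; linarith
    have ht'T : t' < T := by rw [ht'def]; linarith
    obtain ⟨ξ, hξ, hslope⟩ := exists_hasDerivAt_eq_slope w (deriv w) htt'
      (hcont.mono (Set.Icc_subset_Icc ht.1.le ht'T.le))
      (fun x hx => hdw x ⟨lt_trans ht.1 hx.1, lt_trans hx.2 ht'T⟩)
    have hξI : ξ ∈ Set.Ioo (0:ℝ) T := ⟨lt_trans ht.1 hξ.1, lt_trans hξ.2 ht'T⟩
    have h1 : deriv w ξ ≤ deriv w t := (hanti ht hξI hξ.1).le
    have hwt' : 0 < w t' := hpos t' ⟨by linarith [ht.1], ht'T.le⟩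
    have hwtM : w t ≤ M := hMl t ⟨ht.1.le, ht.2.le⟩
    have ht't : t' - t = (T - t)/2 := by rw [ht'def]; ring
    rw [hslope, ht't] at h1
    have h2 : -(2*M)/(T - t) ≤ (w t' - w t)/((T - t)/2) := by
      rw [div_le_div_iff₀ hTt (by positivity)]
      have hprod : 0 ≤ (w t' - w t + M) * (T - t) :=
        mul_nonneg (by linarith) hTt.le
      nlinarith [hprod]
    linarith
  have hhalf : T/2 ∈ Set.Ioo (0:ℝ) T := ⟨by linarith, by linarith⟩
  set K := deriv w (T/2) with hKdef
  set A : ℝ := c * P / 2 with hAdef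
  have hA : 0 < A := by rw [hAdef]; positivity
  set B : ℝ := |K| * T + 4 * M with hBdef
  have hB : 0 < B := by
    have := mul_nonneg (abs_nonneg K) hT0.le
    rw [hBdef]; linarith
  -- the main bound for all small u
  have hbound : ∀ u : ℝ, 0 < u → u < T/2 → A * u ^ ((3:ℝ)-p) ≤ B := by
    intro u hu huT
    set t0 := T - u with ht0def
    have ht0I : t0 ∈ Set.Ioo (0:ℝ) T := ⟨by rw [ht0def]; linarith, by rw [ht0def]; linarith⟩
    have ht0half : T/2 < t0 := by rw [ht0def]; linarith
    set t1 := (t0 + T)/2 with ht1def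
    have ht01 : t0 < t1 := by rw [ht1def]; linarith [ht0I.2]
    have ht1T : t1 < T := by rw [ht1def]; linarith [ht0I.2]
    have ht1I : t1 ∈ Set.Ioo (0:ℝ) T := ⟨by linarith [ht0I.1], ht1T⟩
    obtain ⟨ξ, hξ, hslope⟩ := exists_hasDerivAt_eq_slope (deriv w) (deriv (deriv w)) ht01
      (hgcont.mono (Set.Icc_subset_Ioo ht0I.1 ht1T))
      (fun x hx => hdg x ⟨lt_trans ht0I.1 hx.1, lt_trans hx.2 ht1T⟩)
    have hξI : ξ ∈ Set.Ioo (0:ℝ) T := ⟨lt_trans ht0I.1 hξ.1, lt_trans hξ.2 ht1T⟩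
    have h1 := hineq ξ hξI
    have hTξ : 0 < T - ξ := sub_pos.mpr hξI.2
    have hTξu : T - ξ ≤ u := by
      have := hξ.1
      rw [ht0def] at this
      linarith
    have h2 : u ^ ((1:ℝ)-p) ≤ (T - ξ) ^ ((1:ℝ)-p) :=
      Real.rpow_le_rpow_of_nonpos hTξ hTξu (by linarith)
    have h3 : deriv (deriv w) ξ ≤ -(c * u ^ ((1:ℝ)-p) * P) := by
      have := mul_le_mul_of_nonneg_right
        (mul_le_mul_of_nonneg_left h2 hc.le) hP.le
      linarith
    have ht10 : t1 - t0 = u/2 := by rw [ht1def, ht0def]; ring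
    have ht10pos : (0:ℝ) < u/2 := by linarith
    have he : deriv w t1 - deriv w t0 = deriv (deriv w) ξ * (t1 - t0) := by
      rw [eq_comm, div_eq_iff (by linarith : t1 - t0 ≠ 0)] at hslope
      linarith [hslope]
    have hKt0 : deriv w t0 < K := hanti hhalf ht0I ht0half
    have hmul : deriv (deriv w) ξ * (u/2) ≤ -(c * u ^ ((1:ℝ)-p) * P) * (u/2) :=
      mul_le_mul_of_nonneg_right h3 ht10pos.le
    rw [ht10] at he
    have h4 : deriv w t1 ≤ K - c * u ^ ((1:ℝ)-p) * P * (u/2) := by nlinarith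
    have h5 := hlow t1 ht1I
    have hT1 : T - t1 = u/2 := by rw [ht1def, ht0def]; ring
    rw [hT1] at h5
    have h6 : (-(4*M))/u ≤ deriv w t1 := by
      have e : -(2*M)/(u/2) = (-(4*M))/u := by
        field_simp
        norm_num
      linarith [e ▸ h5]
    have h7 : -(4*M) ≤ (K - c * u ^ ((1:ℝ)-p) * P * (u/2)) * u :=
      (div_le_iff₀ hu).mp (le_trans h6 h4)
    have e2 : (K - c * u ^ ((1:ℝ)-p) * P * (u/2)) * u
        = K*u - (c*P/2) * (u ^ ((1:ℝ)-p) * u^2) := by ring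
    rw [e2] at h7
    have hu3 : u ^ ((3:ℝ)-p) = u ^ ((1:ℝ)-p) * u^2 := by
      rw [← Real.rpow_natCast u 2, ← Real.rpow_add hu]
      norm_num
      ring_nf
    have hKu : K * u ≤ |K| * T := by
      have h8 : K * u ≤ |K| * u := mul_le_mul_of_nonneg_right (le_abs_self K) hu.le
      have h9 : |K| * u ≤ |K| * T := mul_le_mul_of_nonneg_left (by linarith) (abs_nonneg K)
      linarith
    rw [hAdef, hBdef, hu3]
    linarith
  -- choose u small to contradict
  have hq : (3:ℝ) - p < 0 := by linarith
  set D : ℝ := (B/A) ^ ((3:ℝ)-p)⁻¹ with hDdef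
  have hBA : 0 < B/A := div_pos hB hA
  have hD : 0 < D := Real.rpow_pos_of_pos hBA _
  set u := min (T/4) (D/2) with hudef
  have hu : 0 < u := lt_min (by linarith) (by linarith)
  have huT : u < T/2 := lt_of_le_of_lt (min_le_left _ _) (by linarith)
  have huD : u < D := lt_of_le_of_lt (min_le_right _ _) (by linarith)
  have hlt : B/A < u ^ ((3:ℝ)-p) := by
    have h1 : D ^ ((3:ℝ)-p) < u ^ ((3:ℝ)-p) := Real.rpow_lt_rpow_of_neg hu huD hq
    have h2 : D ^ ((3:ℝ)-p) = B/A := by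
      rw [hDdef, ← Real.rpow_mul hBA.le, inv_mul_cancel₀ (ne_of_lt hq), Real.rpow_one]
    linarith
  have hcontra := hbound u hu huT
  have := (div_lt_iff₀ hA).mp hlt
  nlinarith
end

section
/- For λ = 1 and 1 < p ≤ 5, the function φ(r,a) = −(p+3)/2 + (p−1)(a − r) tan(r) is negative for all r ∈ (0, a) whenever 0 < a ≤ π/2. -/
open Real

/- With `x = π/2 - r`, the bound `x < tan x = (tan r)⁻¹` gives `(π/2 - r) tan r < 1`; hence
`(p-1)(a-r) tan r < p - 1 ≤ (p+3)/2` as soon as `p ≤ 5`. -/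

theorem Real.pi_div_two_sub_mul_tan_lt_one {r : ℝ} (h0 : 0 < r) (h : r < π / 2) :
    (π / 2 - r) * tan r < 1 := by
  have htan : 0 < tan r := tan_pos_of_pos_of_lt_pi_div_two h0 h
  have hlt : π / 2 - r < (tan r)⁻¹ := by
    rw [← tan_pi_div_two_sub]
    exact lt_tan (by linarith) (by linarith)
  calc (π / 2 - r) * tan r < (tan r)⁻¹ * tan r := mul_lt_mul_of_pos_right hlt htan
    _ = 1 := inv_mul_cancel₀ htan.ne'

theorem stmt7_general (p a r : ℝ) (hp1 : 1 < p) (hp5 : p ≤ 5) (ha : a ≤ π/2)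
    (hr : r ∈ Set.Ioo 0 a) :
    -(p+3)/2 + (p-1) * (a - r) * Real.tan r < 0 := by
  obtain ⟨hr0, hra⟩ := hr
  have hrπ : r < π / 2 := hra.trans_le ha
  have htan : 0 < tan r := tan_pos_of_pos_of_lt_pi_div_two hr0 hrπ
  have hlt_one : (a - r) * tan r < 1 :=
    (mul_le_mul_of_nonneg_right (by linarith) htan.le).trans_lt
      (pi_div_two_sub_mul_tan_lt_one hr0 hrπ)
  have hlt : (p - 1) * ((a - r) * tan r) < p - 1 := by
    simpa using mul_lt_mul_of_pos_left hlt_one (sub_pos.mpr hp1)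
  rw [mul_assoc]
  linarith

theorem stmt7 (p a r : ℝ) (hp1 : 1 < p) (hp5 : p ≤ 5) (ha0 : 0 < a) (ha : a ≤ π/2)
    (hr : r ∈ Set.Ioo 0 a) :
    -(p+3)/2 + (p-1) * (a - r) * Real.tan r < 0 :=
  stmt7_general p a r hp1 hp5 ha hr
end

section
/- Let p > 5, 0 < λ ≤ 1, h(t) = (cos r(t))^{1−p}(cos(r(t)√(1−λ)))^{p+3}. Then ∫₀^s (t(π/2)² − p t²) h(t) dt → −∞ as s → t(π/2)⁻. -/
/-!
Write `k = √(1-λ)` and `T = t(π/2)`. On `[T/2, T)` the factor `T² - p t²` is at most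
`-(p/4 - 1) T² < 0`, the factor `cos (r k)^(p+3)` is at least `cos (π k / 2)^(p+3) > 0`, and
`cos r ≤ π/2 - r ≤ (π/2) (T - t)`, the last step by `sin (a - b) ≤ tan a - tan b` and
Jordan's inequality. So the integrand lies below `-c (T - t)^(1-p)`, whose integral diverges
to `-∞` because `1 - p < -1`. On `[0, T)` the integrand is continuous, since there
`r(t) = arctan (t k) / k`.
-/

open Real Set Filter Topology MeasureTheory

lemma tendsto_rpow_sub_nhdsLT_atTop {T q : ℝ} (hq : q < 0) :
    Tendsto (fun s => (T - s) ^ q) (𝓝[<] T) atTop := by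
  have hsub : Tendsto (fun s => T - s) (𝓝[<] T) (𝓝[>] 0) :=
    tendsto_nhdsWithin_of_tendsto_nhds_of_eventually_within _
      (((continuous_sub_left T).tendsto' T 0 (sub_self T)).mono_left nhdsWithin_le_nhds)
      (eventually_nhdsWithin_of_forall fun s hs => sub_pos.2 (mem_Iio.1 hs))
  exact (tendsto_rpow_neg_nhdsGT_zero hq).comp hsub

lemma integral_rpow_sub {T b s q : ℝ} (hq : q ≠ -1) (hb : b < T) (hs : s < T) :
    ∫ t in b..s, (T - t) ^ q = ((T - b) ^ (q + 1) - (T - s) ^ (q + 1)) / (q + 1) := by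
  rw [intervalIntegral.integral_comp_sub_left (fun u => u ^ q),
    integral_rpow (Or.inr ⟨hq, fun h0 => ?_⟩)]
  rcases mem_uIcc.1 h0 with h | h <;> linarith [h.1, h.2]

lemma tendsto_integral_rpow_sub_atTop {T b q : ℝ} (hb : b < T) (hq : q < -1) :
    Tendsto (fun s => ∫ t in b..s, (T - t) ^ q) (𝓝[<] T) atTop := by
  have hq1 : q + 1 < 0 := by linarith
  refine (tendsto_atTop_add_const_right _ ((T - b) ^ (q + 1) / (q + 1))
    ((tendsto_rpow_sub_nhdsLT_atTop hq1).atTop_mul_const (inv_pos.2 (neg_pos.2 hq1)))).congr' ?_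
  filter_upwards [self_mem_nhdsWithin] with s hs
  rw [integral_rpow_sub hq.ne hb hs]
  field_simp
  ring

theorem tendsto_intervalIntegral_atBot_of_le_neg_rpow {f : ℝ → ℝ} {a b T c q : ℝ}
    (hab : a ≤ b) (hbT : b < T) (hc : 0 < c) (hq : q < -1)
    (hf : ContinuousOn f (Ico a T)) (hbound : ∀ t ∈ Ico b T, f t ≤ -c * (T - t) ^ q) :
    Tendsto (fun s => ∫ t in a..s, f t) (𝓝[<] T) atBot := by
  have hint : ∀ x ∈ Ico a T, ∀ y ∈ Ico a T, IntervalIntegrable f volume x y :=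
    fun x hx y hy => (hf.mono (ordConnected_Ico.uIcc_subset hx hy)).intervalIntegrable
  have hb : b ∈ Ico a T := ⟨hab, hbT⟩
  refine tendsto_atBot_mono' _ ?_ (tendsto_atBot_add_const_left _ (∫ t in a..b, f t)
    ((tendsto_integral_rpow_sub_atTop hbT hq).const_mul_atTop_of_neg (neg_neg_of_pos hc)))
  filter_upwards [Ioo_mem_nhdsLT hbT] with s hs
  have hs' : s ∈ Ico a T := ⟨hab.trans hs.1.le, hs.2⟩
  have hpow : IntervalIntegrable (fun t => (T - t) ^ q) volume b s := by
    refine ContinuousOn.intervalIntegrable (ContinuousOn.rpow_const (by fun_prop) fun t ht => ?_)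
    rw [uIcc_of_le hs.1.le] at ht
    exact Or.inl (sub_ne_zero.2 (ht.2.trans_lt hs.2).ne')
  rw [← intervalIntegral.integral_add_adjacent_intervals
    (hint a ⟨le_rfl, hab.trans_lt hbT⟩ b hb) (hint b hb s hs'),
    ← intervalIntegral.integral_const_mul]
  gcongr
  exact intervalIntegral.integral_mono_on hs.1.le (hint b hb s hs') (hpow.const_mul _)
    fun t ht => hbound t ⟨ht.1, ht.2.trans_lt hs.2⟩

lemma cos_le_pi_div_two_sub {r : ℝ} (hr : r ≤ π / 2) : cos r ≤ π / 2 - r := by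
  rw [← sin_pi_div_two_sub]
  exact sin_le (by linarith)

lemma sin_sub_le_tan_sub_tan {a b : ℝ} (hb : -(π / 2) < b) (hba : b ≤ a) (ha : a < π / 2) :
    sin (a - b) ≤ tan a - tan b := by
  have hcosa : 0 < cos a := cos_pos_of_mem_Ioo ⟨by linarith, ha⟩
  have hcosb : 0 < cos b := cos_pos_of_mem_Ioo ⟨hb, by linarith⟩
  have hsin : 0 ≤ sin (a - b) := sin_nonneg_of_nonneg_of_le_pi (by linarith) (by linarith)
  rw [tan_eq_sin_div_cos, tan_eq_sin_div_cos, div_sub_div _ _ hcosa.ne' hcosb.ne', ← sin_sub,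
    le_div_iff₀ (by positivity)]
  exact mul_le_of_le_one_right hsin (mul_le_one₀ (cos_le_one a) hcosb.le (cos_le_one b))

/-- `tan (r k) / k`, continued by its limit `r` at `k = 0`; for `k = √(1 - λ)` this is the
paper's `t(r)`. -/
noncomputable def scaledTan (k r : ℝ) : ℝ := if k = 0 then r else tan (r * k) / k

noncomputable def scaledArctan (k t : ℝ) : ℝ := if k = 0 then t else arctan (t * k) / k

section scaledTan

variable {k : ℝ}

lemma continuous_scaledArctan : Continuous (scaledArctan k) := by
  unfold scaledArctan
  split_ifs <;> fun_prop

lemma scaledArctan_scaledTan (hk0 : 0 ≤ k) (hk1 : k ≤ 1) {r : ℝ} (hr0 : 0 ≤ r)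
    (hr : r < π / 2) : scaledArctan k (scaledTan k r) = r := by
  unfold scaledArctan scaledTan
  split_ifs with hk
  · rfl
  · have hrk : r * k ≤ r := mul_le_of_le_one_right hr0 hk1
    rw [div_mul_cancel₀ _ hk, arctan_tan (by nlinarith [pi_pos]) (by linarith),
      mul_div_cancel_right₀ _ hk]

lemma scaledTan_pi_div_two_pos (hk0 : 0 ≤ k) (hk1 : k < 1) : 0 < scaledTan k (π / 2) := by
  unfold scaledTan
  split_ifs with hk
  · positivity
  · have hk' : 0 < k := lt_of_le_of_ne hk0 (Ne.symm hk)
    exact div_pos (tan_pos_of_pos_of_lt_pi_div_two (by positivity) (by nlinarith [pi_pos])) hk'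

lemma cos_le_pi_div_two_mul_scaledTan_sub (hk0 : 0 ≤ k) (hk1 : k < 1) {r : ℝ} (hr0 : 0 ≤ r)
    (hr : r < π / 2) : cos r ≤ π / 2 * (scaledTan k (π / 2) - scaledTan k r) := by
  refine (cos_le_pi_div_two_sub hr.le).trans ?_
  unfold scaledTan
  split_ifs with hk
  · nlinarith [pi_gt_three]
  · have hk' : 0 < k := lt_of_le_of_ne hk0 (Ne.symm hk)
    have hjordan : 2 / π * (π / 2 * k - r * k) ≤ sin (π / 2 * k - r * k) :=
      mul_le_sin (by nlinarith) (by nlinarith [pi_pos])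
    have htan := sin_sub_le_tan_sub_tan (a := π / 2 * k) (b := r * k) (by nlinarith [pi_pos])
      (by nlinarith) (by nlinarith [pi_pos])
    rw [← sub_div, ← mul_div_assoc, le_div_iff₀ hk']
    calc (π / 2 - r) * k = π / 2 * (2 / π * (π / 2 * k - r * k)) := by field_simp
      _ ≤ π / 2 * (tan (π / 2 * k) - tan (r * k)) := by gcongr; exact hjordan.trans htan

lemma scaledTan_sqrt_one_sub {lam : ℝ} (hl : lam ≤ 1) (r : ℝ) :
    scaledTan √(1 - lam) r = if lam = 1 then r else tan (r * √(1 - lam)) / √(1 - lam) := by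
  simp only [scaledTan, sqrt_eq_zero', sub_nonpos, hl.ge_iff_eq]

end scaledTan

lemma rpow_mul_le_cos_rpow_mul_cos_rpow {k p r m x : ℝ} (hk0 : 0 ≤ k) (hk1 : k ≤ 1)
    (hp : 1 ≤ p) (hr0 : 0 ≤ r) (hr : r < π / 2) (hm : 0 < m) (hx : cos r ≤ m * x) :
    m ^ (1 - p) * cos (π / 2 * k) ^ (p + 3) * x ^ (1 - p)
      ≤ cos r ^ (1 - p) * cos (r * k) ^ (p + 3) := by
  have hcos : 0 < cos r := cos_pos_of_mem_Ioo ⟨by linarith, hr⟩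
  have hx0 : 0 ≤ x := (pos_of_mul_pos_right (hcos.trans_le hx) hm.le).le
  have hck : 0 ≤ cos (π / 2 * k) :=
    cos_nonneg_of_mem_Icc ⟨by nlinarith [pi_pos], by nlinarith [pi_pos]⟩
  calc m ^ (1 - p) * cos (π / 2 * k) ^ (p + 3) * x ^ (1 - p)
      = (m * x) ^ (1 - p) * cos (π / 2 * k) ^ (p + 3) := by rw [mul_rpow hm.le hx0]; ring
    _ ≤ cos r ^ (1 - p) * cos (r * k) ^ (p + 3) := by
      refine mul_le_mul (rpow_le_rpow_of_nonpos hcos hx (by linarith))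
        (rpow_le_rpow hck (cos_le_cos_of_nonneg_of_le_pi (by positivity) (by nlinarith [pi_pos])
          (by nlinarith)) (by linarith)) (rpow_nonneg hck _) (rpow_nonneg hcos.le _)

lemma sq_sub_mul_sq_mul_le_of_half_le {p T t y z : ℝ} (hp : 4 < p) (hT : 0 ≤ T)
    (ht : T / 2 ≤ t) (hz : 0 ≤ z) (hzy : z ≤ y) :
    (T ^ 2 - p * t ^ 2) * y ≤ -((p / 4 - 1) * T ^ 2) * z := by
  have ht2 : (T / 2) ^ 2 ≤ t ^ 2 := pow_le_pow_left₀ (by positivity) ht 2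
  have hfac : T ^ 2 - p * t ^ 2 ≤ -((p / 4 - 1) * T ^ 2) := by nlinarith
  have hneg : -((p / 4 - 1) * T ^ 2) ≤ 0 := by nlinarith
  calc (T ^ 2 - p * t ^ 2) * y ≤ -((p / 4 - 1) * T ^ 2) * y :=
        mul_le_mul_of_nonneg_right hfac (hz.trans hzy)
    _ ≤ -((p / 4 - 1) * T ^ 2) * z := mul_le_mul_of_nonpos_left hzy hneg

lemma sq_sub_mul_cos_rpow_mul_cos_rpow_le {k p r T t : ℝ} (hk0 : 0 ≤ k) (hk1 : k ≤ 1)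
    (hp : 4 < p) (hT : 0 < T) (ht : t ∈ Ico (T / 2) T) (hr0 : 0 ≤ r) (hr : r < π / 2)
    (hcos : cos r ≤ π / 2 * (T - t)) :
    (T ^ 2 - p * t ^ 2) * (cos r ^ (1 - p) * cos (r * k) ^ (p + 3))
      ≤ -((p / 4 - 1) * T ^ 2 * ((π / 2) ^ (1 - p) * cos (π / 2 * k) ^ (p + 3)))
        * (T - t) ^ (1 - p) := by
  have hck : 0 ≤ cos (π / 2 * k) :=
    cos_nonneg_of_mem_Icc ⟨by nlinarith [pi_pos], by nlinarith [pi_pos]⟩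
  have hz : 0 ≤ (π / 2) ^ (1 - p) * cos (π / 2 * k) ^ (p + 3) * (T - t) ^ (1 - p) :=
    mul_nonneg (mul_nonneg (by positivity) (rpow_nonneg hck _))
      (rpow_nonneg (sub_nonneg.2 ht.2.le) _)
  have hcos' := rpow_mul_le_cos_rpow_mul_cos_rpow (p := p) hk0 hk1 (by linarith) hr0 hr
    (by positivity) hcos
  exact (sq_sub_mul_sq_mul_le_of_half_le hp hT.le ht.1 hz hcos').trans_eq (by ring)

lemma continuousOn_cos_rpow_mul_cos_rpow {ρ : ℝ → ℝ} {s : Set ℝ} {a b k : ℝ}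
    (hρ : ContinuousOn ρ s) (hcos : ∀ t ∈ s, cos (ρ t) ≠ 0) (hb : 0 ≤ b) :
    ContinuousOn (fun t => cos (ρ t) ^ a * cos (ρ t * k) ^ b) s :=
  (continuous_cos.comp_continuousOn hρ |>.rpow_const fun t ht => Or.inl (hcos t ht)).mul
    (continuous_cos.comp_continuousOn (hρ.mul continuousOn_const) |>.rpow_const
      fun _ _ => Or.inr hb)

/-- For `p > 5` and `0 < λ ≤ 1`, `∫₀^s (t(π/2)² - p t²) h(t) dt → -∞` as `s → t(π/2)⁻`. -/
theorem stmt11 (p lam : ℝ) (hp : 5 < p) (hl0 : 0 < lam) (hl1 : lam ≤ 1)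
    (tval : ℝ → ℝ)
    (htval : ∀ r, tval r = if lam = 1 then r
      else Real.tan (r * Real.sqrt (1 - lam)) / Real.sqrt (1 - lam))
    (ρ : ℝ → ℝ)
    (hρ : ∀ t ∈ Set.Ico 0 (tval (π/2)),
      ρ t ∈ Set.Ico 0 (π/2) ∧ tval (ρ t) = t)
    (h : ℝ → ℝ)
    (hh : ∀ t, h t = (Real.cos (ρ t)) ^ (1 - p)
      * (Real.cos (ρ t * Real.sqrt (1 - lam))) ^ (p + 3)) :
    Filter.Tendsto (fun s => ∫ t in (0:ℝ)..s, ((tval (π/2))^2 - p * t^2) * h t)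
      (nhdsWithin (tval (π/2)) (Set.Iio (tval (π/2)))) Filter.atBot := by
  have htval' : tval = scaledTan √(1 - lam) :=
    funext fun r => (htval r).trans (scaledTan_sqrt_one_sub hl1 r).symm
  subst htval'
  set k := √(1 - lam)
  have hk0 : 0 ≤ k := sqrt_nonneg _
  have hk1 : k < 1 := (sqrt_lt' one_pos).2 (by linarith)
  set T := scaledTan k (π / 2)
  have hT0 : 0 < T := scaledTan_pi_div_two_pos hk0 hk1
  have hρc : ContinuousOn ρ (Ico 0 T) := continuous_scaledArctan.continuousOn.congr fun t ht =>
    have ⟨⟨hr0, hr⟩, hinv⟩ := hρ t ht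
    (scaledArctan_scaledTan hk0 hk1.le hr0 hr).symm.trans (congrArg _ hinv)
  have hcont : ContinuousOn (fun t => (T ^ 2 - p * t ^ 2) * h t) (Ico 0 T) :=
    (continuousOn_const.sub (by fun_prop)).mul <| (continuousOn_cos_rpow_mul_cos_rpow hρc
      (fun t ht => (cos_pos_of_mem_Ioo
        ⟨by linarith [(hρ t ht).1.1, pi_pos], (hρ t ht).1.2⟩).ne')
      (by linarith)).congr fun t _ => hh t
  have hc : 0 < cos (π / 2 * k) ^ (p + 3) :=
    rpow_pos_of_pos (cos_pos_of_mem_Ioo ⟨by nlinarith [pi_pos], by nlinarith [pi_pos]⟩) _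
  refine tendsto_intervalIntegral_atBot_of_le_neg_rpow (half_pos hT0).le (half_lt_self hT0)
    (c := (p / 4 - 1) * T ^ 2 * ((π / 2) ^ (1 - p) * cos (π / 2 * k) ^ (p + 3)))
    (mul_pos (mul_pos (by linarith) (by positivity)) (mul_pos (by positivity) hc))
    (by linarith : 1 - p < -1) hcont fun t ht => ?_
  obtain ⟨⟨hr0, hr⟩, hinv⟩ := hρ t ⟨(half_pos hT0).le.trans ht.1, ht.2⟩
  rw [hh]
  exact sq_sub_mul_cos_rpow_mul_cos_rpow_le hk0 hk1.le (by linarith : (4 : ℝ) < p) hT0 ht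
    hr0 hr
    (by simpa only [hinv] using cos_le_pi_div_two_mul_scaledTan_sub hk0 hk1 hr0 hr)
end

section
/- Let λ = 1 and 1 < p ≤ (π² + 12)/(π² − 4). Define φ(r) = −r·cot(r) + ((p−1)/(p+3))·((π/2)² − r²) for r ∈ (0, π/2). Then φ(r) < 0 for all r ∈ (0, π/2) (with φ(r) → ((p−1)/(p+3))(π/2)² − 1 ≤ 0 as r → 0 and φ(π/2) = 0). -/
/-!
The bound on `p` says exactly that `(p - 1)/(p + 3) ≤ 4/π²`, and
`(4/π²)((π/2)² - r²) = 1 - 4r²/π²`, so it suffices to prove `1 - 4r²/π² < r cot r` on `(0, π/2)`,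
i.e. the Becker–Stark inequality `tan r / r < π²/(π² - 4r²)`. For `r ≤ 6/5` this follows from the
Taylor bounds `sin r ≤ r - r³/6 + r⁵/120` and `cos r ≥ 1 - r²/2 + r⁴/24 - r⁶/720`, obtained by
integrating `sin x ≥ x - x³/6` three times; near `π/2` one substitutes `w = π/2 - r` and the
lower-order bounds `cos w ≤ 1 - w²/2 + w⁴/24`, `sin w ≥ w - w³/6` suffice.
-/

open Real

lemma nonneg_of_hasDerivAt_nonneg {f f' : ℝ → ℝ} (hf : ∀ x, HasDerivAt f (f' x) x)
    (h₀ : f 0 = 0) (hf' : ∀ x, 0 < x → 0 ≤ f' x) {x : ℝ} (hx : 0 ≤ x) : 0 ≤ f x := by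
  have hmono : MonotoneOn f (Set.Ici 0) :=
    monotoneOn_of_hasDerivWithinAt_nonneg (convex_Ici 0)
      (fun y _ ↦ (hf y).continuousAt.continuousWithinAt)
      (fun y _ ↦ (hf y).hasDerivWithinAt) (by simpa using hf')
  simpa [h₀] using hmono Set.self_mem_Ici hx hx

namespace Real

lemma cos_le_quartic {x : ℝ} (hx : 0 ≤ x) : cos x ≤ 1 - x ^ 2 / 2 + x ^ 4 / 24 := by
  have hd (y : ℝ) : HasDerivAt (fun t ↦ 1 - t ^ 2 / 2 + t ^ 4 / 24 - cos t)
      (sin y - (y - y ^ 3 / 6)) y := by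
    refine (((((hasDerivAt_pow 2 y).div_const 2).const_sub 1).add
      ((hasDerivAt_pow 4 y).div_const 24)).sub (hasDerivAt_cos y)).congr_deriv ?_
    ring
  linarith [nonneg_of_hasDerivAt_nonneg hd (by simp)
    (fun y hy ↦ by linarith [sin_ge_sub_cube hy.le]) hx]

lemma sin_le_quintic {x : ℝ} (hx : 0 ≤ x) : sin x ≤ x - x ^ 3 / 6 + x ^ 5 / 120 := by
  have hd (y : ℝ) : HasDerivAt (fun t ↦ t - t ^ 3 / 6 + t ^ 5 / 120 - sin t)
      (1 - y ^ 2 / 2 + y ^ 4 / 24 - cos y) y := by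
    refine ((((hasDerivAt_id y).sub ((hasDerivAt_pow 3 y).div_const 6)).add
      ((hasDerivAt_pow 5 y).div_const 120)).sub (hasDerivAt_sin y)).congr_deriv ?_
    ring
  linarith [nonneg_of_hasDerivAt_nonneg hd (by simp)
    (fun y hy ↦ by linarith [cos_le_quartic hy.le]) hx]

lemma sextic_le_cos {x : ℝ} (hx : 0 ≤ x) :
    1 - x ^ 2 / 2 + x ^ 4 / 24 - x ^ 6 / 720 ≤ cos x := by
  have hd (y : ℝ) : HasDerivAt (fun t ↦ cos t - (1 - t ^ 2 / 2 + t ^ 4 / 24 - t ^ 6 / 720))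
      (y - y ^ 3 / 6 + y ^ 5 / 120 - sin y) y := by
    refine ((hasDerivAt_cos y).sub (((((hasDerivAt_pow 2 y).div_const 2).const_sub 1).add
      ((hasDerivAt_pow 4 y).div_const 24)).sub
      ((hasDerivAt_pow 6 y).div_const 720))).congr_deriv ?_
    ring
  linarith [nonneg_of_hasDerivAt_nonneg hd (by simp)
    (fun y hy ↦ by linarith [sin_le_quintic hy.le]) hx]

lemma becker_stark_of_le {r : ℝ} (hr₀ : 0 < r) (hr : r ≤ 6 / 5) :
    (π ^ 2 - 4 * r ^ 2) * sin r < π ^ 2 * r * cos r := by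
  have hπ₁ := pi_gt_d2
  have hπ₂ := pi_lt_d2
  have hπr : 0 ≤ π ^ 2 - 4 * r ^ 2 := by nlinarith
  have hpoly : (π ^ 2 - 4 * r ^ 2) * (r - r ^ 3 / 6 + r ^ 5 / 120)
      < π ^ 2 * r * (1 - r ^ 2 / 2 + r ^ 4 / 24 - r ^ 6 / 720) := by
    -- the difference of the two sides is `r³` times this quadratic in `r²`
    have hq : 0 < (4 - π ^ 2 / 3) - (2 / 3 - π ^ 2 / 30) * r ^ 2
        + (1 / 30 - π ^ 2 / 720) * r ^ 4 := by
      have hr2 : r ^ 2 ≤ 36 / 25 := by nlinarith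
      have hπ2 : 9.85 < π ^ 2 ∧ π ^ 2 < 9.93 := ⟨by nlinarith, by nlinarith⟩
      nlinarith [mul_le_mul_of_nonneg_left hr2 (by linarith : (0 : ℝ) ≤ 2 / 3 - π ^ 2 / 30),
        mul_nonneg (by linarith : (0 : ℝ) ≤ 1 / 30 - π ^ 2 / 720) (pow_nonneg hr₀.le 4)]
    nlinarith [mul_pos (pow_pos hr₀ 3) hq]
  calc (π ^ 2 - 4 * r ^ 2) * sin r ≤ (π ^ 2 - 4 * r ^ 2) * (r - r ^ 3 / 6 + r ^ 5 / 120) :=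
        mul_le_mul_of_nonneg_left (sin_le_quintic hr₀.le) hπr
    _ < π ^ 2 * r * (1 - r ^ 2 / 2 + r ^ 4 / 24 - r ^ 6 / 720) := hpoly
    _ ≤ π ^ 2 * r * cos r := mul_le_mul_of_nonneg_left (sextic_le_cos hr₀.le) (by positivity)

-- `becker_stark` at `r = π/2 - w`
lemma becker_stark_of_pi_div_two_sub_lt {w : ℝ} (hw₀ : 0 < w) (hw : w < 2 / 5) :
    4 * w * (π - w) * cos w < π ^ 2 * (π / 2 - w) * sin w := by
  have hπ₁ := pi_gt_d2
  have hπ₂ := pi_lt_d2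
  have hpoly : 4 * w * (π - w) * (1 - w ^ 2 / 2 + w ^ 4 / 24)
      < π ^ 2 * (π / 2 - w) * (w - w ^ 3 / 6) := by
    -- the difference of the two sides is `w` times this quintic
    have hq : 0 < (π ^ 3 / 2 - 4 * π) - (π ^ 2 - 4) * w + (2 * π - π ^ 3 / 12) * w ^ 2
        - (2 - π ^ 2 / 6) * w ^ 3 - (π / 6) * w ^ 4 + w ^ 5 / 6 := by
      have hπ2 : 9.85 < π ^ 2 ∧ π ^ 2 < 9.93 := ⟨by nlinarith, by nlinarith⟩
      have hπ3 : 30.9 < π ^ 3 ∧ π ^ 3 < 31.3 := ⟨by nlinarith, by nlinarith⟩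
      have hw3 : w ^ 3 < 8 / 125 :=
        (pow_lt_pow_left₀ hw hw₀.le three_ne_zero).trans_eq (by norm_num)
      have hw4 : w ^ 4 < 16 / 625 :=
        (pow_lt_pow_left₀ hw hw₀.le four_ne_zero).trans_eq (by norm_num)
      nlinarith [mul_le_mul_of_nonneg_left hw.le (by linarith : (0 : ℝ) ≤ π ^ 2 - 4),
        mul_nonneg (by linarith : (0 : ℝ) ≤ 2 * π - π ^ 3 / 12) (sq_nonneg w),
        mul_le_mul_of_nonneg_left hw3.le (by linarith : (0 : ℝ) ≤ 2 - π ^ 2 / 6),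
        mul_le_mul_of_nonneg_left hw4.le (by linarith : (0 : ℝ) ≤ π / 6), pow_pos hw₀ 5]
    nlinarith [mul_pos hw₀ hq]
  calc 4 * w * (π - w) * cos w ≤ 4 * w * (π - w) * (1 - w ^ 2 / 2 + w ^ 4 / 24) :=
        mul_le_mul_of_nonneg_left (cos_le_quartic hw₀.le) (by nlinarith)
    _ < π ^ 2 * (π / 2 - w) * (w - w ^ 3 / 6) := hpoly
    _ ≤ π ^ 2 * (π / 2 - w) * sin w :=
        mul_le_mul_of_nonneg_left (sin_ge_sub_cube hw₀.le) (by nlinarith)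

lemma becker_stark {r : ℝ} (hr₀ : 0 < r) (hr : r < π / 2) :
    (π ^ 2 - 4 * r ^ 2) * sin r < π ^ 2 * r * cos r := by
  rcases le_or_gt r (6 / 5) with hr' | hr'
  · exact becker_stark_of_le hr₀ hr'
  · have h := becker_stark_of_pi_div_two_sub_lt (w := π / 2 - r) (by linarith)
      (by linarith [pi_lt_d2])
    rw [cos_pi_div_two_sub, sin_pi_div_two_sub] at h
    convert h using 2 <;> ring

lemma one_sub_four_mul_sq_div_pi_sq_lt_mul_cot {r : ℝ} (hr₀ : 0 < r) (hr : r < π / 2) :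
    1 - 4 * r ^ 2 / π ^ 2 < r * cot r := by
  have hsin : 0 < sin r := sin_pos_of_pos_of_lt_pi hr₀ (by linarith [pi_pos])
  rw [cot_eq_cos_div_sin, ← mul_div_assoc, lt_div_iff₀ hsin, one_sub_div (by positivity),
    div_mul_eq_mul_div, div_lt_iff₀ (by positivity)]
  linarith [becker_stark hr₀ hr]

end Real

lemma div_le_four_div_pi_sq {p : ℝ} (hp : -3 < p) (hp' : p ≤ (π ^ 2 + 12) / (π ^ 2 - 4)) :
    (p - 1) / (p + 3) ≤ 4 / π ^ 2 := by
  have hπ : 4 < π ^ 2 := by nlinarith [pi_gt_three]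
  rw [le_div_iff₀ (by linarith)] at hp'
  rw [div_le_div_iff₀ (by linarith) (by linarith)]
  linarith

/-- For `λ = 1` and `1 < p ≤ (π²+12)/(π²-4)`, the function
`φ(r) = -r cot r + ((p-1)/(p+3))((π/2)² - r²)` is negative on `(0, π/2)`. -/
theorem stmt14 (p : ℝ) (hp1 : 1 < p) (hp2 : p ≤ (π^2 + 12)/(π^2 - 4)) :
    ∀ r ∈ Set.Ioo (0:ℝ) (π/2),
      -r * Real.cot r + ((p-1)/(p+3)) * ((π/2)^2 - r^2) < 0 := by
  rintro r ⟨hr₀, hr⟩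
  have hc := div_le_four_div_pi_sq (by linarith) hp2
  have hgap : 0 ≤ (π / 2) ^ 2 - r ^ 2 := by nlinarith
  have hbound : 4 / π ^ 2 * ((π / 2) ^ 2 - r ^ 2) = 1 - 4 * r ^ 2 / π ^ 2 := by
    field_simp; ring
  linarith [mul_le_mul_of_nonneg_right hc hgap, one_sub_four_mul_sq_div_pi_sq_lt_mul_cot hr₀ hr]
end

section
/- Let 3/4 < λ < 1 and 1 < p ≤ 5. Define φ(r) = (1/2)·sec((π/2)√(1−λ))·[−(p+3)cos((π/2 − 2r)√(1−λ)) + 2(p−1)cos(r√(1−λ))]. Then φ(r) < 0 for all r ∈ [π/4, π/2); moreover φ is strictly convex on [π/4, π/2), φ'(π/4) < 0, φ'(π/2) > 0, φ(π/4) ≤ (1/2)sec((π/2)√(1−λ))(p−5) ≤ 0 and φ(π/2) = (p−5)/2 ≤ 0. -/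
/-!
Write `s = √(1-λ) ∈ (0, 1)` and `φ = C · g` with `C = (1/2) sec(πs/2) > 0` and
`g(r) = -(p+3) cos((π/2-2r)s) + 2(p-1) cos(rs)`. On `[π/4, π/2)` the two angles satisfy
`0 ≤ (2r-π/2)s < rs < π/2`, so `0 < cos(rs) < cos((π/2-2r)s)`. Since `2(p-1) ≤ p+3` this makes `g`
negative, and it makes `g'' = s² (4(p+3) cos((π/2-2r)s) - 2(p-1) cos(rs))` positive. The
remaining claims are evaluations at the endpoints.
-/

open Real Set

lemma StrictConvexOn.const_mul_of_pos {D : Set ℝ} {f : ℝ → ℝ} {c : ℝ} (hc : 0 < c)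
    (hf : StrictConvexOn ℝ D f) : StrictConvexOn ℝ D fun x => c * f x := by
  refine ⟨hf.1, fun x hx y hy hxy a b ha hb hab => ?_⟩
  have := mul_lt_mul_of_pos_left (hf.2 hx hy hxy ha hb hab) hc
  simp only [smul_eq_mul, mul_add, mul_left_comm c] at this ⊢
  exact this

noncomputable def cosComb (p s r : ℝ) : ℝ :=
  -(p + 3) * cos ((π / 2 - 2 * r) * s) + 2 * (p - 1) * cos (r * s)

noncomputable def cosCombDeriv (p s r : ℝ) : ℝ :=
  -2 * (p + 3) * s * sin ((π / 2 - 2 * r) * s) - 2 * (p - 1) * s * sin (r * s)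

section Derivatives

variable (p s r : ℝ)

lemma hasDerivAt_sub_two_mul_mul : HasDerivAt (fun r => (π / 2 - 2 * r) * s) (-2 * s) r := by
  simpa using ((hasDerivAt_id r).const_mul 2).const_sub (π / 2) |>.mul_const s

lemma hasDerivAt_cosComb : HasDerivAt (cosComb p s) (cosCombDeriv p s r) r := by
  have h := (((hasDerivAt_sub_two_mul_mul s r).cos).const_mul (-(p + 3))).add
    (((hasDerivAt_mul_const s).cos).const_mul (2 * (p - 1)))
  exact h.congr_deriv (by simp only [cosCombDeriv]; ring)

lemma deriv_cosComb : deriv (cosComb p s) = cosCombDeriv p s :=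
  funext fun r => (hasDerivAt_cosComb p s r).deriv

lemma hasDerivAt_cosCombDeriv :
    HasDerivAt (cosCombDeriv p s)
      (s ^ 2 * (4 * (p + 3) * cos ((π / 2 - 2 * r) * s) - 2 * (p - 1) * cos (r * s))) r := by
  have h := (((hasDerivAt_sub_two_mul_mul s r).sin).const_mul (-2 * (p + 3) * s)).sub
    (((hasDerivAt_mul_const s).sin).const_mul (2 * (p - 1) * s))
  exact h.congr_deriv (by ring)

end Derivatives

section OnIco

variable {p s : ℝ}

lemma cos_mul_pos_of_mem_Ico {r : ℝ} (hs : 0 < s) (hs1 : s ≤ 1) (hr : r ∈ Ico (π / 4) (π / 2)) :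
    0 < cos (r * s) := by
  have hπ := pi_pos
  exact cos_pos_of_mem_Ioo ⟨by nlinarith [hr.1], by nlinarith [hr.2]⟩

lemma cos_mul_lt_of_mem_Ico {r : ℝ} (hs : 0 < s) (hs1 : s ≤ 1) (hr : r ∈ Ico (π / 4) (π / 2)) :
    cos (r * s) < cos ((π / 2 - 2 * r) * s) := by
  have hπ := pi_pos
  rw [← cos_neg ((π / 2 - 2 * r) * s), show -((π / 2 - 2 * r) * s) = (2 * r - π / 2) * s by ring]
  exact cos_lt_cos_of_nonneg_of_le_pi (mul_nonneg (by linarith [hr.1]) hs.le)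
    (by nlinarith [hr.2]) (mul_lt_mul_of_pos_right (by linarith [hr.2]) hs)

lemma cosComb_neg (hp3 : -3 < p) (hp5 : p ≤ 5) (hs : 0 < s) (hs1 : s ≤ 1) {r : ℝ}
    (hr : r ∈ Ico (π / 4) (π / 2)) : cosComb p s r < 0 := by
  have hpos := cos_mul_pos_of_mem_Ico hs hs1 hr
  have hlt := cos_mul_lt_of_mem_Ico hs hs1 hr
  have : 2 * (p - 1) * cos (r * s) < (p + 3) * cos ((π / 2 - 2 * r) * s) :=
    calc 2 * (p - 1) * cos (r * s) ≤ (p + 3) * cos (r * s) := by gcongr; linarith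
      _ < (p + 3) * cos ((π / 2 - 2 * r) * s) := by gcongr; linarith
  simp only [cosComb]
  linarith

lemma strictConvexOn_cosComb (hp3 : -3 < p) (hs : 0 < s) (hs1 : s ≤ 1) :
    StrictConvexOn ℝ (Ico (π / 4) (π / 2)) (cosComb p s) := by
  refine strictConvexOn_of_deriv2_pos (convex_Ico _ _)
    (fun x _ => (hasDerivAt_cosComb p s x).continuousAt.continuousWithinAt) fun x hx => ?_
  rw [interior_Ico] at hx
  have hpos := cos_mul_pos_of_mem_Ico hs hs1 (Ioo_subset_Ico_self hx)
  have hlt := cos_mul_lt_of_mem_Ico hs hs1 (Ioo_subset_Ico_self hx)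
  rw [Function.iterate_succ_apply, Function.iterate_one, deriv_cosComb,
    (hasDerivAt_cosCombDeriv p s x).deriv]
  have : 0 < 4 * (p + 3) * cos ((π / 2 - 2 * x) * s) - 2 * (p - 1) * cos (x * s) := by
    nlinarith
  positivity

end OnIco

section Endpoints

variable {p s : ℝ}

lemma cosCombDeriv_pi_div_four_neg (hp1 : 1 < p) (hs : 0 < s) (hs4 : s < 4) :
    cosCombDeriv p s (π / 4) < 0 := by
  have hsin : 0 < sin (π / 4 * s) :=
    sin_pos_of_pos_of_lt_pi (by positivity) (by nlinarith [pi_pos])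
  have : 0 < (p - 1) * s * sin (π / 4 * s) := by have := sub_pos.2 hp1; positivity
  simp only [cosCombDeriv, show (π / 2 - 2 * (π / 4)) * s = 0 by ring, sin_zero]
  linarith

lemma cosCombDeriv_pi_div_two_pos (hs : 0 < s) (hs2 : s < 2) : 0 < cosCombDeriv p s (π / 2) := by
  have hsin : 0 < sin (π / 2 * s) :=
    sin_pos_of_pos_of_lt_pi (by positivity) (by nlinarith [pi_pos])
  simp only [cosCombDeriv, show (π / 2 - 2 * (π / 2)) * s = -(π / 2 * s) by ring, sin_neg]
  nlinarith

lemma cosComb_pi_div_four_le (hp1 : 1 ≤ p) : cosComb p s (π / 4) ≤ p - 5 := by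
  have := mul_le_mul_of_nonneg_left (cos_le_one (π / 4 * s)) (by linarith : 0 ≤ 2 * (p - 1))
  simp only [cosComb, show (π / 2 - 2 * (π / 4)) * s = 0 by ring, cos_zero]
  linarith

lemma cosComb_pi_div_two : cosComb p s (π / 2) = (p - 5) * cos (π / 2 * s) := by
  simp only [cosComb, show (π / 2 - 2 * (π / 2)) * s = -(π / 2 * s) by ring, cos_neg]
  ring

end Endpoints

/-- For `3/4 < λ < 1` and `1 < p ≤ 5`, the function
`φ(r) = (1/2) sec((π/2)√(1-λ)) [-(p+3) cos((π/2-2r)√(1-λ)) + 2(p-1) cos(r√(1-λ))]`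
is negative on `[π/4, π/2)`; moreover it is strictly convex there, `φ'(π/4) < 0`,
`φ'(π/2) > 0`, `φ(π/4) ≤ (1/2) sec((π/2)√(1-λ)) (p-5) ≤ 0` and `φ(π/2) = (p-5)/2 ≤ 0`. -/
theorem stmt16 (lam p : ℝ) (h1 : 3/4 < lam) (h2 : lam < 1) (hp1 : 1 < p) (hp5 : p ≤ 5)
    (φ : ℝ → ℝ)
    (hφ : φ = fun r => (1/2) * (1 / Real.cos ((π/2) * Real.sqrt (1 - lam)))
      * (-(p+3) * Real.cos ((π/2 - 2*r) * Real.sqrt (1 - lam))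
        + 2*(p-1) * Real.cos (r * Real.sqrt (1 - lam)))) :
    (∀ r ∈ Set.Ico (π/4) (π/2), φ r < 0) ∧
    StrictConvexOn ℝ (Set.Ico (π/4) (π/2)) φ ∧
    deriv φ (π/4) < 0 ∧
    0 < deriv φ (π/2) ∧
    φ (π/4) ≤ (1/2) * (1 / Real.cos ((π/2) * Real.sqrt (1 - lam))) * (p - 5) ∧
    (1/2) * (1 / Real.cos ((π/2) * Real.sqrt (1 - lam))) * (p - 5) ≤ 0 ∧
    φ (π/2) = (p - 5)/2 ∧ (p - 5)/2 ≤ 0 := by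
  set s := √(1 - lam)
  have hs : 0 < s := sqrt_pos.2 (by linarith)
  have hs1 : s < 1 := (sqrt_lt' one_pos).2 (by linarith)
  have hcos : 0 < cos (π / 2 * s) :=
    cos_pos_of_mem_Ioo ⟨by nlinarith [pi_pos], by nlinarith [pi_pos]⟩
  set C := 1 / 2 * (1 / cos (π / 2 * s))
  have hC : 0 < C := by positivity
  replace hφ : φ = fun r => C * cosComb p s r := hφ
  have hderiv (r : ℝ) : deriv φ r = C * cosCombDeriv p s r := by
    rw [hφ]; exact ((hasDerivAt_cosComb p s r).const_mul C).deriv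
  subst hφ
  refine ⟨fun r hr => mul_neg_of_pos_of_neg hC (cosComb_neg (by linarith) hp5 hs hs1.le hr),
    (strictConvexOn_cosComb (by linarith) hs hs1.le).const_mul_of_pos hC, ?_, ?_,
    mul_le_mul_of_nonneg_left (cosComb_pi_div_four_le hp1.le) hC.le,
    mul_nonpos_of_nonneg_of_nonpos hC.le (by linarith), ?_, by linarith⟩
  · rw [hderiv]
    exact mul_neg_of_pos_of_neg hC (cosCombDeriv_pi_div_four_neg hp1 hs (by linarith))
  · rw [hderiv]
    exact mul_pos hC (cosCombDeriv_pi_div_two_pos hs (by linarith))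
  · show C * cosComb p s (π / 2) = _
    have hCcos : C * cos (π / 2 * s) = 1 / 2 := by
      rw [mul_assoc, one_div_mul_cancel hcos.ne', mul_one]
    rw [cosComb_pi_div_two, mul_left_comm, hCcos]
    ring
end
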